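/- arXiv:1809.04541 — 5 statements merged into one kernel-verified Lean document; each statement's English description precedes it below -/
import Mathlib

section
/- If a lag window k satisfies lim_{x→0} (1 - k(x))/|x|^q = k_q for some q ≥ 1, then the lugsail window k_L(x) = (1/(1-c))k(x) - (c/(1-c))k(rx) satisfies lim_{x→0} (1 - k_L(x))/|x|^q = k_q (1 - c r^q)/(1-c). -/
open Filter

/-- If lim_{x→0} (1 - k(x))/|x|^q = k_q, then the lugsail window
k_L(x) = (1/(1-c)) k(x) - (c/(1-c)) k(rx) satisfies
lim_{x→0} (1 - k_L(x))/|x|^q = k_q (1 - c r^q)/(1-c). -/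
theorem lugsail_first_order_bias_constant (k : ℝ → ℝ) (q kq r c : ℝ)
    (hq : 1 ≤ q) (hr : 1 ≤ r) (hc0 : 0 ≤ c) (hc1 : c < 1) (hk0 : k 0 = 1)
    (hlim : Tendsto (fun x : ℝ => (1 - k x) / |x| ^ q) (nhdsWithin 0 {0}ᶜ) (nhds kq)) :
    Tendsto (fun x : ℝ =>
        (1 - ((1 / (1 - c)) * k x - (c / (1 - c)) * k (r * x))) / |x| ^ q)
      (nhdsWithin 0 {0}ᶜ) (nhds (kq * (1 - c * r ^ q) / (1 - c))) := by
  have hr0 : (0:ℝ) < r := lt_of_lt_of_le one_pos hr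
  have hrq : (0:ℝ) < r ^ q := Real.rpow_pos_of_pos hr0 q
  have hc : (1:ℝ) - c ≠ 0 := by linarith
  -- composition x ↦ r * x preserves punctured neighborhood of 0
  have hcomp : Tendsto (fun x : ℝ => r * x) (nhdsWithin 0 {0}ᶜ) (nhdsWithin 0 {0}ᶜ) := by
    rw [tendsto_nhdsWithin_iff]
    constructor
    · have : Tendsto (fun x : ℝ => r * x) (nhds 0) (nhds (r * 0)) :=
        (continuous_const.mul continuous_id).tendsto 0
      simpa using this.mono_left nhdsWithin_le_nhds
    · filter_upwards [self_mem_nhdsWithin] with x hx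
      simp only [Set.mem_compl_iff, Set.mem_singleton_iff] at hx ⊢
      exact mul_ne_zero (ne_of_gt hr0) hx
  have h2 : Tendsto (fun x : ℝ => (1 - k (r * x)) / |x| ^ q)
      (nhdsWithin 0 {0}ᶜ) (nhds (kq * r ^ q)) := by
    have := (hlim.comp hcomp).mul_const (r ^ q)
    refine this.congr fun x => ?_
    simp only [Function.comp]
    have habs : |r * x| ^ q = r ^ q * |x| ^ q := by
      rw [abs_mul, abs_of_pos hr0, Real.mul_rpow (le_of_lt hr0) (abs_nonneg x)]
    rw [habs, div_mul_eq_mul_div, mul_comm, mul_div_mul_left _ _ (ne_of_gt hrq)]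
  have h1 : Tendsto (fun x : ℝ =>
      (1 / (1 - c)) * ((1 - k x) / |x| ^ q) - (c / (1 - c)) * ((1 - k (r * x)) / |x| ^ q))
      (nhdsWithin 0 {0}ᶜ)
      (nhds ((1 / (1 - c)) * kq - (c / (1 - c)) * (kq * r ^ q))) :=
    (hlim.const_mul _).sub (h2.const_mul _)
  have heq : kq * (1 - c * r ^ q) / (1 - c)
      = (1 / (1 - c)) * kq - (c / (1 - c)) * (kq * r ^ q) := by
    field_simp
  rw [heq]
  refine h1.congr fun x => ?_
  rw [mul_div_assoc', mul_div_assoc', div_sub_div_same]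
  congr 1
  field_simp
  ring
end

section
/- The lugsail Bartlett window with parameters r and c satisfies ∫_{-∞}^{∞} k_L(x)² dx = (2/(3(1-c)²)) [1 + c²/r - 3c/r + c/r²], and in particular for c = 1/2, r = 3 this equals 46/27. -/
/-!
Expanding the square, `∫ k_L²` is a combination of `∫ k² = 2/3`, of `∫ k(r·)² = 2/(3r)` (by
scaling) and of the cross term `∫ k(x) k(rx) = 1/r - 1/(3r²)`. Since `r ≥ 1`, the cross term is
supported in `[-1/r, 1/r]`, where it equals the quadratic `(1 - |x|)(1 - r|x|)`. Both of these
integrands are even, so each integral is twice the integral of a quadratic polynomial over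
`[0, 1]`, respectively `[0, 1/r]`.
-/

open MeasureTheory Set

theorem integral_quadratic (A B C a b : ℝ) :
    ∫ x in a..b, (A + B * x + C * x ^ 2) =
      A * (b - a) + B * (b ^ 2 - a ^ 2) / 2 + C * (b ^ 3 - a ^ 3) / 3 := by
  have hderiv : ∀ x ∈ uIcc a b, HasDerivAt (fun x => A * x + B * x ^ 2 / 2 + C * x ^ 3 / 3)
      (A + B * x + C * x ^ 2) x := by
    intro x _
    have h := (((hasDerivAt_id x).const_mul A).add
      (((hasDerivAt_pow 2 x).const_mul B).div_const 2)).add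
      (((hasDerivAt_pow 3 x).const_mul C).div_const 3)
    exact h.congr_deriv (by norm_num; ring)
  rw [intervalIntegral.integral_eq_sub_of_hasDerivAt hderiv
    (Continuous.intervalIntegrable (by fun_prop) a b)]
  ring

theorem integral_sub_sq {α : Type*} [MeasurableSpace α] {μ : Measure α} {f g : α → ℝ}
    (hf : Integrable (fun x => f x ^ 2) μ) (hg : Integrable (fun x => g x ^ 2) μ)
    (hfg : Integrable (fun x => f x * g x) μ) (a b : ℝ) :
    ∫ x, (a * f x - b * g x) ^ 2 ∂μ =
      a ^ 2 * ∫ x, f x ^ 2 ∂μ + b ^ 2 * ∫ x, g x ^ 2 ∂μ - 2 * a * b * ∫ x, f x * g x ∂μ := by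
  have hexp : (fun x => (a * f x - b * g x) ^ 2) =
      fun x => a ^ 2 * f x ^ 2 + b ^ 2 * g x ^ 2 - 2 * a * b * (f x * g x) := by
    funext x; ring
  rw [hexp, integral_sub, integral_add, integral_const_mul, integral_const_mul, integral_const_mul]
  exacts [hf.const_mul _, hg.const_mul _, (hf.const_mul _).add (hg.const_mul _), hfg.const_mul _]

theorem integral_eq_two_mul_intervalIntegral_of_even {f : ℝ → ℝ} (heven : ∀ x, f |x| = f x)
    {a : ℝ} (ha : 0 ≤ a) (hf : ∀ t, a < t → f t = 0) : ∫ x, f x = 2 * ∫ t in (0)..a, f t := by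
  calc ∫ x, f x = ∫ x, f |x| := by simp only [heven]
    _ = 2 * ∫ t in Ioi 0, f t := integral_comp_abs
    _ = 2 * ∫ t in (0)..a, f t := by
      rw [intervalIntegral.integral_of_le ha,
        setIntegral_eq_of_subset_of_forall_sdiff_eq_zero measurableSet_Ioi Ioc_subset_Ioi_self]
      rintro t ⟨ht0, hta⟩
      exact hf t (lt_of_not_ge fun h => hta ⟨ht0, h⟩)

noncomputable def bartlett (x : ℝ) : ℝ := if |x| ≤ 1 then 1 - |x| else 0

theorem bartlett_of_abs_le {x : ℝ} (hx : |x| ≤ 1) : bartlett x = 1 - |x| := if_pos hx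

theorem bartlett_of_one_lt_abs {x : ℝ} (hx : 1 < |x|) : bartlett x = 0 := if_neg hx.not_ge

theorem bartlett_abs (x : ℝ) : bartlett |x| = bartlett x := by
  simp only [bartlett, abs_abs]

theorem bartlett_eq_max (x : ℝ) : bartlett x = max (1 - |x|) 0 := by
  unfold bartlett
  split_ifs with hx
  · exact (max_eq_left (by linarith)).symm
  · exact (max_eq_right (by linarith)).symm

theorem continuous_bartlett : Continuous bartlett := by
  simp only [funext bartlett_eq_max]
  fun_prop

theorem hasCompactSupport_bartlett : HasCompactSupport bartlett :=
  HasCompactSupport.intro (isCompact_closedBall 0 1) fun x hx =>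
    bartlett_of_one_lt_abs (by simpa [Real.dist_eq] using hx)

theorem integrable_bartlett_mul {g : ℝ → ℝ} (hg : Continuous g) :
    Integrable fun x => bartlett x * g x :=
  (continuous_bartlett.mul hg).integrable_of_hasCompactSupport hasCompactSupport_bartlett.mul_right

theorem integral_bartlett_sq : ∫ x, bartlett x ^ 2 = 2 / 3 := by
  have hprofile : ∀ t ∈ uIcc (0 : ℝ) 1, bartlett t ^ 2 = 1 + (-2) * t + 1 * t ^ 2 := by
    intro t ht
    rw [uIcc_of_le zero_le_one] at ht
    rw [bartlett_of_abs_le (abs_le.2 ⟨by linarith [ht.1], ht.2⟩), abs_of_nonneg ht.1]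
    ring
  rw [integral_eq_two_mul_intervalIntegral_of_even (fun x => by rw [bartlett_abs]) zero_le_one
      fun t ht => by simp [bartlett_of_one_lt_abs (ht.trans_le (le_abs_self t))],
    intervalIntegral.integral_congr hprofile, integral_quadratic]
  norm_num

theorem integral_bartlett_comp_mul_sq {r : ℝ} (hr : 0 < r) :
    ∫ x, bartlett (r * x) ^ 2 = 2 / (3 * r) := by
  rw [Measure.integral_comp_mul_left (fun y => bartlett y ^ 2), integral_bartlett_sq,
    abs_of_pos (inv_pos.2 hr), smul_eq_mul]
  field_simp

theorem integral_bartlett_mul_bartlett_comp_mul {r : ℝ} (hr : 1 ≤ r) :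
    ∫ x, bartlett x * bartlett (r * x) = 1 / r - 1 / (3 * r ^ 2) := by
  have hr0 : 0 < r := zero_lt_one.trans_le hr
  have hprofile : ∀ t ∈ uIcc (0 : ℝ) r⁻¹,
      bartlett t * bartlett (r * t) = 1 + (-(1 + r)) * t + r * t ^ 2 := by
    intro t ht
    rw [uIcc_of_le (inv_nonneg.2 hr0.le)] at ht
    have hrt : r * t ≤ 1 := by
      simpa [hr0.ne'] using mul_le_mul_of_nonneg_left ht.2 hr0.le
    have ht1 : t ≤ 1 := ht.2.trans (inv_le_one_of_one_le₀ hr)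
    rw [bartlett_of_abs_le (abs_le.2 ⟨by linarith [ht.1], ht1⟩),
      bartlett_of_abs_le (abs_le.2 ⟨by nlinarith [ht.1], hrt⟩), abs_of_nonneg ht.1,
      abs_of_nonneg (mul_nonneg hr0.le ht.1)]
    ring
  have hsupport : ∀ t, r⁻¹ < t → bartlett t * bartlett (r * t) = 0 := fun t ht => by
    rw [bartlett_of_one_lt_abs ((inv_lt_iff_one_lt_mul₀' hr0).1 ht |>.trans_le (le_abs_self _)),
      mul_zero]
  have heven : ∀ x, bartlett |x| * bartlett (r * |x|) = bartlett x * bartlett (r * x) :=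
    fun x => by rw [bartlett_abs, ← abs_of_pos hr0, ← abs_mul, bartlett_abs, abs_of_pos hr0]
  rw [integral_eq_two_mul_intervalIntegral_of_even heven (inv_nonneg.2 hr0.le) hsupport,
    intervalIntegral.integral_congr hprofile, integral_quadratic]
  field_simp
  ring

theorem lugsail_bartlett_square_integral_general (r c : ℝ) (hr : 1 ≤ r)
    (k : ℝ → ℝ) (hk : k = fun x => if |x| ≤ 1 then 1 - |x| else 0)
    (kL : ℝ → ℝ) (hkL : kL = fun x => (1 / (1 - c)) * k x - (c / (1 - c)) * k (r * x)) :
    (∫ x : ℝ, (kL x) ^ 2) = (2 / (3 * (1 - c) ^ 2)) * (1 + c ^ 2 / r - 3 * c / r + c / r ^ 2)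
    ∧ (c = 1 / 2 → r = 3 → (∫ x : ℝ, (kL x) ^ 2) = 46 / 27) := by
  obtain rfl : k = bartlett := hk
  subst hkL
  have hr0 : 0 < r := zero_lt_one.trans_le hr
  have hcont : Continuous fun x => bartlett (r * x) :=
    continuous_bartlett.comp (continuous_const_mul r)
  have hformula : ∫ x, ((1 / (1 - c)) * bartlett x - (c / (1 - c)) * bartlett (r * x)) ^ 2 =
      (2 / (3 * (1 - c) ^ 2)) * (1 + c ^ 2 / r - 3 * c / r + c / r ^ 2) := by
    have hsq : Integrable fun x => bartlett x ^ 2 := by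
      simpa only [sq] using integrable_bartlett_mul continuous_bartlett
    rw [integral_sub_sq hsq (hsq.comp_mul_left' hr0.ne') (integrable_bartlett_mul hcont),
      integral_bartlett_sq, integral_bartlett_comp_mul_sq hr0,
      integral_bartlett_mul_bartlett_comp_mul hr]
    generalize 1 - c = d
    ring
  refine ⟨hformula, fun hc hr3 => ?_⟩
  rw [hformula, hc, hr3]
  norm_num

/-- The lugsail Bartlett window satisfies
∫ k_L(x)² dx = (2/(3(1-c)²)) [1 + c²/r - 3c/r + c/r²], and for c = 1/2, r = 3 this
equals 46/27. -/
theorem lugsail_bartlett_square_integral (r c : ℝ) (hr : 1 ≤ r) (hc0 : 0 ≤ c) (hc1 : c < 1)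
    (k : ℝ → ℝ) (hk : k = fun x => if |x| ≤ 1 then 1 - |x| else 0)
    (kL : ℝ → ℝ) (hkL : kL = fun x => (1 / (1 - c)) * k x - (c / (1 - c)) * k (r * x)) :
    (∫ x : ℝ, (kL x) ^ 2) = (2 / (3 * (1 - c) ^ 2)) * (1 + c ^ 2 / r - 3 * c / r + c / r ^ 2)
    ∧ (c = 1 / 2 → r = 3 → (∫ x : ℝ, (kL x) ^ 2) = 46 / 27) :=
  lugsail_bartlett_square_integral_general r c hr k hk kL hkL
end

section
/- Let B be standard Brownian motion, n = ab, r | b. If fine batch q of length b/r is not contained in coarse batch p of length b (i.e., q ∉ {rp,...,r(p+1)-1}), then Cov(B̄_p(b) - B̄, B̄_q(b/r) - B̄) = -1/n. -/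
/-!
Both batch-mean deviations are linear combinations of values of `B`, so their covariance is the
bilinear form `∑ᵢ ∑ⱼ cᵢ dⱼ min(sᵢ, tⱼ)`; the identity `E[B_s B_t] = min(s, t)` comes from
polarising the Gaussian second moments of `B_s`, `B_t` and `B_s + B_t`. For disjoint batches the
four cross terms between the two increments cancel, and the terms involving `B_n` contribute
`-1/n - 1/n + 1/n`.
-/

open MeasureTheory ProbabilityTheory
open scoped NNReal

lemma min_sub_min_sub_min_add_min_eq_zero {u v w x : ℝ} (huv : u ≤ v) (hwx : w ≤ x)
    (h : v ≤ w ∨ x ≤ u) : min v x - min v w - min u x + min u w = 0 := by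
  rcases h with h | h <;> simp only [min_def] <;> split_ifs <;> linarith

section

variable {Ω : Type*} [MeasurableSpace Ω] {μ : Measure Ω}

lemma hasGaussianLaw_of_map_eq_gaussianReal {X : Ω → ℝ} {m : ℝ} {v : ℝ≥0}
    (h : μ.map X = gaussianReal m v) : HasGaussianLaw X μ :=
  ⟨h ▸ inferInstance⟩

lemma integral_sq_of_map_eq_gaussianReal {X : Ω → ℝ} {v : ℝ≥0}
    (h : μ.map X = gaussianReal 0 v) : ∫ ω, X ω ^ 2 ∂μ = v := by
  have hX : HasLaw X (gaussianReal 0 v) μ :=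
    ⟨(hasGaussianLaw_of_map_eq_gaussianReal h).aemeasurable, h⟩
  rw [← variance_id_gaussianReal (μ := 0) (v := v),
    variance_of_integral_eq_zero aemeasurable_id integral_id_gaussianReal]
  exact hX.integral_comp (f := fun x => x ^ 2) (by fun_prop)

def HasBrownianGaussianLaws (μ : Measure Ω) (B : ℝ → Ω → ℝ) : Prop :=
  ∀ (m : ℕ) (t c : Fin m → ℝ), (∀ i, 0 ≤ t i) →
    μ.map (fun ω => ∑ i, c i * B (t i) ω) =
      gaussianReal 0 (Real.toNNReal (∑ i, ∑ j, c i * c j * min (t i) (t j)))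

namespace HasBrownianGaussianLaws

variable {B : ℝ → Ω → ℝ}

lemma map_eval (hB : HasBrownianGaussianLaws μ B) {t : ℝ} (ht : 0 ≤ t) :
    μ.map (B t) = gaussianReal 0 t.toNNReal := by
  simpa using hB 1 ![t] ![1] (by simp [ht])

lemma map_add (hB : HasBrownianGaussianLaws μ B) {s t : ℝ} (hs : 0 ≤ s) (ht : 0 ≤ t) :
    μ.map (fun ω => B s ω + B t ω) = gaussianReal 0 (s + t + 2 * min s t).toNNReal := by
  have h := hB 2 ![s, t] ![1, 1] (by simp [Fin.forall_fin_two, hs, ht])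
  simp only [Fin.sum_univ_two, Matrix.cons_val_zero, Matrix.cons_val_one,
    Matrix.cons_val_fin_one, one_mul, mul_one, min_self] at h
  convert h using 3
  rw [min_comm]
  ring

lemma memLp_two (hB : HasBrownianGaussianLaws μ B) {t : ℝ} (ht : 0 ≤ t) : MemLp (B t) 2 μ :=
  (hasGaussianLaw_of_map_eq_gaussianReal (hB.map_eval ht)).memLp_two

lemma integral_mul (hB : HasBrownianGaussianLaws μ B) {s t : ℝ} (hs : 0 ≤ s) (ht : 0 ≤ t) :
    ∫ ω, B s ω * B t ω ∂μ = min s t := by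
  have hsum := integral_sq_of_map_eq_gaussianReal (hB.map_add hs ht)
  have hss := integral_sq_of_map_eq_gaussianReal (hB.map_eval hs)
  have htt := integral_sq_of_map_eq_gaussianReal (hB.map_eval ht)
  have hBs := hB.memLp_two hs
  have hBt := hB.memLp_two ht
  have hprod : Integrable (fun ω => 2 * (B s ω * B t ω)) μ := (hBs.integrable_mul hBt).const_mul 2
  have hexpand : ∫ ω, (B s ω + B t ω) ^ 2 ∂μ =
      ∫ ω, B s ω ^ 2 ∂μ + 2 * ∫ ω, B s ω * B t ω ∂μ + ∫ ω, B t ω ^ 2 ∂μ := by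
    rw [← integral_const_mul, ← integral_add hBs.integrable_sq hprod,
      ← integral_add (hBs.integrable_sq.fun_add hprod) hBt.integrable_sq]
    congr 1 with ω
    ring
  rw [Real.coe_toNNReal _ hs] at hss
  rw [Real.coe_toNNReal _ ht] at htt
  rw [hexpand, hss, htt, Real.coe_toNNReal _ (by positivity)] at hsum
  linarith

lemma integral_sum_mul_sum (hB : HasBrownianGaussianLaws μ B) {ι κ : Type*} {I : Finset ι}
    {J : Finset κ} {s : ι → ℝ} {t : κ → ℝ} (hs : ∀ i ∈ I, 0 ≤ s i) (ht : ∀ j ∈ J, 0 ≤ t j)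
    (c : ι → ℝ) (d : κ → ℝ) :
    ∫ ω, (∑ i ∈ I, c i * B (s i) ω) * (∑ j ∈ J, d j * B (t j) ω) ∂μ =
      ∑ i ∈ I, ∑ j ∈ J, c i * d j * min (s i) (t j) := by
  have hterm : ∀ i j, (fun ω => c i * B (s i) ω * (d j * B (t j) ω)) =
      fun ω => c i * d j * (B (s i) ω * B (t j) ω) := fun i j => by
    ext ω
    ring
  have hint : ∀ i ∈ I, ∀ j ∈ J, Integrable (fun ω => c i * B (s i) ω * (d j * B (t j) ω)) μ :=
    fun i hi j hj => hterm i j ▸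
      ((hB.memLp_two (hs i hi)).integrable_mul (hB.memLp_two (ht j hj))).const_mul _
  simp_rw [Finset.sum_mul_sum]
  rw [integral_finsetSum _ fun i hi => integrable_finsetSum _ (hint i hi)]
  refine Finset.sum_congr rfl fun i hi => ?_
  rw [integral_finsetSum _ (hint i hi)]
  refine Finset.sum_congr rfl fun j hj => ?_
  rw [hterm, integral_const_mul, hB.integral_mul (hs i hi) (ht j hj)]

lemma integral_batchDev_mul_batchDev_of_disjoint (hB : HasBrownianGaussianLaws μ B)
    {u v w x N : ℝ} (hu : 0 ≤ u) (huv : u < v) (hvN : v ≤ N) (hw : 0 ≤ w) (hwx : w < x)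
    (hxN : x ≤ N) (hdisj : v ≤ w ∨ x ≤ u) :
    ∫ ω, ((B v ω - B u ω) / (v - u) - B N ω / N) * ((B x ω - B w ω) / (x - w) - B N ω / N) ∂μ
      = -1 / N := by
  have hcov := hB.integral_sum_mul_sum (I := Finset.univ) (J := Finset.univ)
    (s := ![u, v, N]) (t := ![w, x, N])
    (fun i _ => by fin_cases i <;> simp <;> linarith)
    (fun j _ => by fin_cases j <;> simp <;> linarith)
    ![-1 / (v - u), 1 / (v - u), -1 / N] ![-1 / (x - w), 1 / (x - w), -1 / N]
  simp only [Fin.sum_univ_three, Matrix.cons_val_zero, Matrix.cons_val_one, Matrix.cons_val_two,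
    Matrix.head_cons, Matrix.tail_cons] at hcov
  convert hcov using 1
  · congr 1 with ω
    ring
  have hcross := min_sub_min_sub_min_add_min_eq_zero huv.le hwx.le hdisj
  rw [min_eq_left (huv.le.trans hvN), min_eq_left hvN, min_eq_right (hwx.le.trans hxN),
    min_eq_right hxN, min_self]
  have hvu : v - u ≠ 0 := by linarith
  have hxw : x - w ≠ 0 := by linarith
  have hN : N ≠ 0 := by linarith
  linear_combination (norm := skip) (-(1 / (v - u) * (1 / (x - w)))) * hcross
  field_simp
  ring

end HasBrownianGaussianLaws

end

theorem batch_mean_cov_no_overlap_general {Ω : Type*} [MeasurableSpace Ω]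
    (μ : Measure Ω)
    (B : ℝ → Ω → ℝ)
    (hBM : ∀ (m : ℕ) (t c : Fin m → ℝ), (∀ i, 0 ≤ t i) →
      Measure.map (fun ω => ∑ i, c i * B (t i) ω) μ =
        gaussianReal 0 (Real.toNNReal (∑ i, ∑ j, c i * c j * min (t i) (t j))))
    (a r b' n p q : ℕ) (hr : 0 < r) (hb' : 0 < b')
    (hn : n = a * (r * b')) (hp : p < a) (hq : q < r * a)
    (hout : q < r * p ∨ r * (p + 1) ≤ q) :
    ∫ ω, ((B ((p * (r * b') + r * b' : ℕ) : ℝ) ω - B ((p * (r * b') : ℕ) : ℝ) ω)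
            / ((r * b' : ℕ) : ℝ) - B ((n : ℕ) : ℝ) ω / (n : ℝ))
        * ((B ((q * b' + b' : ℕ) : ℝ) ω - B ((q * b' : ℕ) : ℝ) ω) / (b' : ℝ)
            - B ((n : ℕ) : ℝ) ω / (n : ℝ)) ∂μ
      = -1 / (n : ℝ) := by
  have hB : HasBrownianGaussianLaws μ B := hBM
  have hcoarse : p * (r * b') + r * b' ≤ n := by
    rw [hn]
    nlinarith
  have hfine : q * b' + b' ≤ n := by
    rw [hn]
    nlinarith
  have hdisj : p * (r * b') + r * b' ≤ q * b' ∨ q * b' + b' ≤ p * (r * b') := by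
    rcases hout with hbefore | hafter
    · right
      nlinarith
    · left
      nlinarith
  have hL : 0 < r * b' := Nat.mul_pos hr hb'
  convert hB.integral_batchDev_mul_batchDev_of_disjoint (u := ((p * (r * b') : ℕ) : ℝ))
    (v := ((p * (r * b') + r * b' : ℕ) : ℝ)) (w := ((q * b' : ℕ) : ℝ))
    (x := ((q * b' + b' : ℕ) : ℝ)) (N := n) (Nat.cast_nonneg _)
    (by exact_mod_cast Nat.lt_add_of_pos_right hL) (by exact_mod_cast hcoarse) (Nat.cast_nonneg _)
    (by exact_mod_cast Nat.lt_add_of_pos_right hb') (by exact_mod_cast hfine)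
    (by exact_mod_cast hdisj) using 5 <;> push_cast <;> ring

/-- For standard Brownian motion B with n = a·(r·b'), if the fine batch
q of length b' is not contained in coarse batch p of length b = r·b'
(i.e. q < rp or q ≥ r(p+1)), then Cov(B̄_p(b) - B̄, B̄_q(b/r) - B̄) = -1/n. -/
theorem batch_mean_cov_no_overlap {Ω : Type*} [MeasurableSpace Ω]
    (μ : Measure Ω) [IsProbabilityMeasure μ]
    (B : ℝ → Ω → ℝ) (hmeas : ∀ t : ℝ, Measurable (B t))
    (hBM : ∀ (m : ℕ) (t c : Fin m → ℝ), (∀ i, 0 ≤ t i) →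
      Measure.map (fun ω => ∑ i, c i * B (t i) ω) μ =
        gaussianReal 0 (Real.toNNReal (∑ i, ∑ j, c i * c j * min (t i) (t j))))
    (a r b' n p q : ℕ) (ha : 0 < a) (hr : 0 < r) (hb' : 0 < b')
    (hn : n = a * (r * b')) (hp : p < a) (hq : q < r * a)
    (hout : q < r * p ∨ r * (p + 1) ≤ q) :
    ∫ ω, ((B ((p * (r * b') + r * b' : ℕ) : ℝ) ω - B ((p * (r * b') : ℕ) : ℝ) ω)
            / ((r * b' : ℕ) : ℝ) - B ((n : ℕ) : ℝ) ω / (n : ℝ))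
        * ((B ((q * b' + b' : ℕ) : ℝ) ω - B ((q * b' : ℕ) : ℝ) ω) / (b' : ℝ)
            - B ((n : ℕ) : ℝ) ω / (n : ℝ)) ∂μ
      = -1 / (n : ℝ) :=
  batch_mean_cov_no_overlap_general μ B hBM a r b' n p q hr hb' hn hp hq hout
end

section
/- Let n·Var(Ȳ_n) = Σ + Γ/n + o(1/n) for a stationary sequence, where Ȳ_n is the mean of n consecutive observations. Then the batch means estimator with a batches of size b (n = ab) has expectation E[Σ̂_b] = Σ + Γ/b + o(1/b); i.e., (ab/(a-1))·(Var(Ȳ_b batch mean) - Var(Ȳ_n)) = Σ + Γ/b + o(1/b). -/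
open Filter Asymptotics

/-!
Write `v m = Σ + Γ / m + r m` with `r m = o(1/m)`. Substituting into the bias, the `Σ`-parts cancel
exactly, the `Γ`-parts leave `Γ / b + Γ / (a b)`, and the remainders enter as
`r b + (r b - r (a b)) / (a - 1)`. Each of `Γ / (a b)`, `r b` and `r (a b)` is `o(1/b)` because
`a ≥ 1`, and the factor `1 / (a - 1)` stays bounded.
-/

theorem batchMeans_bias_eq {A B V W Sig Gam : ℝ} (hA : A ≠ 0) (hA₁ : A - 1 ≠ 0) (hB : B ≠ 0) :
    A * B / (A - 1) * (V / B - W / (A * B)) - Sig - Gam / B =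
      Gam / A * B⁻¹ + (V - Sig - Gam / B) +
        ((V - Sig - Gam / B) - (W - Sig - Gam / (A * B))) * (A - 1)⁻¹ := by
  field_simp
  ring

theorem Asymptotics.IsLittleO.comp_mul_natCast_inv {α : Type*} {l : Filter α} {r : ℕ → ℝ}
    (hr : r =o[atTop] fun m : ℕ => (m : ℝ)⁻¹) {a b : α → ℕ} (ha : ∀ᶠ x in l, 1 ≤ a x)
    (hb : Tendsto b l atTop) :
    (fun x => r (a x * b x)) =o[l] fun x => (b x : ℝ)⁻¹ := by
  have hab : Tendsto (fun x => a x * b x) l atTop :=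
    tendsto_atTop_mono' l (ha.mono fun x hx => Nat.le_mul_of_pos_left (b x) hx) hb
  refine (hr.comp_tendsto hab).trans_isBigO (IsBigO.of_bound 1 ?_)
  filter_upwards [ha] with x hx
  rcases (b x).eq_zero_or_pos with hbx | hbx
  · simp [hbx]
  · simp only [Function.comp_apply, norm_inv, Real.norm_natCast, one_mul]
    gcongr
    exact Nat.le_mul_of_pos_left (b x) hx

/-- If n·Var(Ȳ_n) = Σ + Γ/n + o(1/n) (encoded by v m = m·Var(Ȳ_m)),
then the batch means estimator with a batches of size b (n = ab) has expectation
E[Σ̂_b] = (ab/(a-1))·(Var(Ȳ_b) - Var(Ȳ_n)) = Σ + Γ/b + o(1/b) as a, b → ∞. -/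
theorem batch_means_expectation_expansion (v : ℕ → ℝ) (Sig Gam : ℝ) (a b : ℕ → ℕ)
    (ha : Tendsto a atTop atTop) (hb : Tendsto b atTop atTop)
    (hv : (fun m : ℕ => v m - Sig - Gam / (m : ℝ)) =o[atTop] fun m : ℕ => ((m : ℝ))⁻¹)
    (E : ℕ → ℝ)
    (hE : ∀ n, E n = (((a n : ℝ) * (b n : ℝ)) / ((a n : ℝ) - 1)) *
        (v (b n) / (b n : ℝ) - v (a n * b n) / ((a n : ℝ) * (b n : ℝ)))) :
    (fun n => E n - Sig - Gam / (b n : ℝ)) =o[atTop] fun n => ((b n : ℝ))⁻¹ := by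
  set r : ℕ → ℝ := fun m => v m - Sig - Gam / (m : ℝ)
  have hA : Tendsto (fun n => (a n : ℝ)) atTop atTop := tendsto_natCast_atTop_atTop.comp ha
  have hr_b : (fun n => r (b n)) =o[atTop] fun n => ((b n : ℝ))⁻¹ := hv.comp_tendsto hb
  have hr_ab : (fun n => r (a n * b n)) =o[atTop] fun n => ((b n : ℝ))⁻¹ :=
    hv.comp_mul_natCast_inv (ha.eventually_ge_atTop 1) hb
  have hGam : (fun n => Gam / (a n : ℝ) * ((b n : ℝ))⁻¹) =o[atTop] fun n => ((b n : ℝ))⁻¹ := by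
    simpa using (isLittleO_one_iff ℝ |>.mpr (tendsto_const_nhds.div_atTop hA)).mul_isBigO
      (isBigO_refl (fun n => ((b n : ℝ))⁻¹) atTop)
  have hinv : (fun n => ((a n : ℝ) - 1)⁻¹) =O[atTop] fun _ => (1 : ℝ) :=
    (tendsto_atTop_add_const_right _ (-1) hA).inv_tendsto_atTop.isBigO_one ℝ
  have hsum := (hGam.add hr_b).add (by simpa using (hr_b.sub hr_ab).mul_isBigO hinv)
  refine hsum.congr' ?_ EventuallyEq.rfl
  filter_upwards [ha.eventually_ge_atTop 2, hb.eventually_ge_atTop 1] with n ha₂ hb₁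
  have ha₂' : (2 : ℝ) ≤ a n := by exact_mod_cast ha₂
  have hb₁' : (1 : ℝ) ≤ b n := by exact_mod_cast hb₁
  rw [hE, batchMeans_bias_eq (by positivity) (by linarith) (by positivity)]
  simp only [r, Nat.cast_mul]
end

section
/- For a positive definite p×p matrix Σ and any sequence of symmetric matrices Σ̂_n → Σ, the eigenvalue-adjusted estimator Σ̂_n⁺ obtained by replacing each eigenvalue d̂_i of the correlation matrix Ĉ_n = V̂^{-1/2}Σ̂_n V̂^{-1/2} with max{d̂_i, ε n^{-u}} (ε, u > 0) and reassembling satisfies: Σ̂_n⁺ is positive definite for every n, and Σ̂_n⁺ → Σ as n → ∞. -/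
/-!
Positive definiteness: `Σ̂⁺ = (P V̂^{1/2})ᵀ D̂⁺ (P V̂^{1/2})` is a congruence of a positive
diagonal matrix by an invertible one. Consistency: the correlation matrices `Ĉ_n` converge to the
positive definite correlation matrix of `Σ`, so by compactness of the unit sphere their quadratic
forms are eventually bounded below on it by some `c > 0`. Each `d̂_i` is such a quadratic form
evaluated at a row of `P`, while `ε n^{-u} → 0`; hence eventually no eigenvalue is changed and
`Σ̂_n⁺ = Σ̂_n`.
-/

open Matrix Filter Topology

namespace Matrix

variable {n : Type*} [Fintype n] [DecidableEq n]

noncomputable def correlation (M : Matrix n n ℝ) : Matrix n n ℝ :=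
  diagonal (fun i => (√(M i i))⁻¹) * M * diagonal (fun i => (√(M i i))⁻¹)

theorem PosDef.transpose_mul_mul_of_isUnit {A B : Matrix n n ℝ} (hA : A.PosDef) (hB : IsUnit B) :
    (Bᵀ * A * B).PosDef := by
  simpa using hA.conjTranspose_mul_mul_same (mulVec_injective_iff_isUnit.2 hB)

theorem PosDef.diagonal_mul_mul_diagonal {M : Matrix n n ℝ} (hM : M.PosDef) {w : n → ℝ}
    (hw : ∀ i, w i ≠ 0) : (diagonal w * M * diagonal w).PosDef := by
  simpa using hM.transpose_mul_mul_of_isUnit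
    (isUnit_diagonal.2 (Pi.isUnit_iff.2 fun i => (hw i).isUnit))

theorem PosDef.correlation {M : Matrix n n ℝ} (hM : M.PosDef) : M.correlation.PosDef :=
  hM.diagonal_mul_mul_diagonal fun _ => inv_ne_zero (Real.sqrt_pos.2 hM.diag_pos).ne'

theorem diagonal_sqrt_mul_correlation_mul_diagonal_sqrt {M : Matrix n n ℝ}
    (hM : ∀ i, 0 < M i i) :
    diagonal (fun i => √(M i i)) * M.correlation * diagonal (fun i => √(M i i)) = M := by
  ext i j
  have hi := (Real.sqrt_pos.2 (hM i)).ne'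
  have hj := (Real.sqrt_pos.2 (hM j)).ne'
  simp only [Matrix.correlation, mul_diagonal, diagonal_mul]
  field_simp

theorem continuousAt_correlation {M : Matrix n n ℝ} (hM : ∀ i, 0 < M i i) :
    ContinuousAt correlation M := by
  have hscale : ContinuousAt (fun A : Matrix n n ℝ => diagonal fun i => (√(A i i))⁻¹) M :=
    continuous_id.matrix_diagonal.continuousAt.comp <| continuousAt_pi.2 fun i =>
      (continuous_id.matrix_elem i i).sqrt.continuousAt.inv₀ (Real.sqrt_pos.2 (hM i)).ne'
  exact (hscale.mul continuousAt_id).mul hscale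

omit [DecidableEq n] in
theorem isCompact_setOf_dotProduct_self_eq_one : IsCompact {x : n → ℝ | x ⬝ᵥ x = 1} := by
  refine (isCompact_closedBall (0 : n → ℝ) 1).of_isClosed_subset
    (isClosed_eq (continuous_id.dotProduct continuous_id) continuous_const) fun x hx => ?_
  rw [Metric.mem_closedBall, dist_zero_right, pi_norm_le_iff_of_nonneg zero_le_one]
  intro j
  rw [Real.norm_eq_abs, ← sq_le_one_iff_abs_le_one, ← show x ⬝ᵥ x = 1 from hx, dotProduct]
  simpa only [sq] using
    Finset.single_le_sum (fun k _ => mul_self_nonneg (x k)) (Finset.mem_univ j)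

omit [DecidableEq n] in
theorem PosDef.exists_pos_eventually_lt_dotProduct_mulVec {C : Matrix n n ℝ} (hC : C.PosDef) :
    ∃ c, 0 < c ∧ ∀ᶠ A in 𝓝 C, ∀ x : n → ℝ, x ⬝ᵥ x = 1 → c < x ⬝ᵥ A *ᵥ x := by
  have hcont : Continuous fun z : Matrix n n ℝ × (n → ℝ) => z.2 ⬝ᵥ z.1 *ᵥ z.2 :=
    continuous_snd.dotProduct (continuous_fst.matrix_mulVec continuous_snd)
  obtain hempty | hne := Set.eq_empty_or_nonempty {x : n → ℝ | x ⬝ᵥ x = 1}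
  · exact ⟨1, one_pos, Eventually.of_forall fun _ x hx => absurd (hempty.subset hx) id⟩
  obtain ⟨x₀, hx₀, hmin⟩ := isCompact_setOf_dotProduct_self_eq_one.exists_isMinOn hne
    (hcont.comp (Continuous.prodMk_right C)).continuousOn
  have hx₀ne : x₀ ≠ 0 := by rintro rfl; simp at hx₀
  have hm : 0 < x₀ ⬝ᵥ C *ᵥ x₀ := by simpa using hC.dotProduct_mulVec_pos hx₀ne
  refine ⟨_, half_pos hm,
    isCompact_setOf_dotProduct_self_eq_one.eventually_forall_of_forall_eventually
      fun x hx => continuousAt_const.eventually_lt hcont.continuousAt ?_⟩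
  have : x₀ ⬝ᵥ C *ᵥ x₀ ≤ x ⬝ᵥ C *ᵥ x := hmin hx
  dsimp only
  linarith

theorem lt_of_forall_lt_dotProduct_mulVec {C P : Matrix n n ℝ} {d : n → ℝ} {c : ℝ}
    (hP : Pᵀ * P = 1) (hC : C = Pᵀ * diagonal d * P)
    (hc : ∀ x : n → ℝ, x ⬝ᵥ x = 1 → c < x ⬝ᵥ C *ᵥ x) (i : n) : c < d i := by
  have hPPt : P * Pᵀ = 1 := mul_eq_one_comm.1 hP
  have hrow : P i ⬝ᵥ P i = 1 := by
    simpa [mul_apply, dotProduct] using congrFun (congrFun hPPt i) i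
  have hdi : d i = P i ⬝ᵥ C *ᵥ P i := by
    have : P * C * Pᵀ = diagonal d := by
      rw [hC, show P * (Pᵀ * diagonal d * P) * Pᵀ = P * Pᵀ * diagonal d * (P * Pᵀ) by
        simp only [Matrix.mul_assoc], hPPt, Matrix.one_mul, Matrix.mul_one]
    simpa [mul_mul_apply] using (congrFun (congrFun this i) i).symm
  exact hdi ▸ hc _ hrow

end Matrix

theorem adjusted_estimator_posdef_consistent_general (p : ℕ)
    (Sig : Matrix (Fin p) (Fin p) ℝ) (hSig : Sig.PosDef)
    (Shat : ℕ → Matrix (Fin p) (Fin p) ℝ)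
    (hdiag : ∀ n i, 0 < Shat n i i)
    (hconv : Tendsto Shat atTop (nhds Sig))
    (P : ℕ → Matrix (Fin p) (Fin p) ℝ) (hP : ∀ n, (P n)ᵀ * P n = 1)
    (d : ℕ → Fin p → ℝ)
    (hC : ∀ n,
      (Matrix.diagonal fun i => (Real.sqrt (Shat n i i))⁻¹) * Shat n *
        (Matrix.diagonal fun i => (Real.sqrt (Shat n i i))⁻¹)
      = (P n)ᵀ * Matrix.diagonal (d n) * P n)
    (ε u : ℝ) (hε : 0 < ε) (hu : 0 < u)
    (Splus : ℕ → Matrix (Fin p) (Fin p) ℝ)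
    (hSplus : ∀ n, Splus n =
      (Matrix.diagonal fun i => Real.sqrt (Shat n i i)) * (P n)ᵀ *
        Matrix.diagonal (fun i => max (d n i) (ε * (n : ℝ) ^ (-u))) * P n *
        (Matrix.diagonal fun i => Real.sqrt (Shat n i i))) :
    (∀ n, 1 ≤ n → (Splus n).PosDef) ∧ Tendsto Splus atTop (nhds Sig) := by
  have hSplus' : ∀ n, Splus n = diagonal (fun i => √(Shat n i i)) *
      ((P n)ᵀ * diagonal (fun i => max (d n i) (ε * (n : ℝ) ^ (-u))) * P n) *
      diagonal (fun i => √(Shat n i i)) := by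
    simp only [hSplus, Matrix.mul_assoc, implies_true]
  refine ⟨fun n hn => ?_, ?_⟩
  · have hfloor : 0 < ε * (n : ℝ) ^ (-u) := by
      have : (0 : ℝ) < n := by exact_mod_cast hn
      positivity
    rw [hSplus']
    have hP_unit : IsUnit (P n) :=
      (isUnit_iff_isUnit_det _).2 (isUnit_det_of_left_inverse (hP n))
    exact ((PosDef.diagonal fun i => hfloor.trans_le (le_max_right _ _)).transpose_mul_mul_of_isUnit
      hP_unit).diagonal_mul_mul_diagonal fun i => (Real.sqrt_pos.2 (hdiag n i)).ne'
  obtain ⟨c, hc, hnear⟩ := hSig.correlation.exists_pos_eventually_lt_dotProduct_mulVec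
  have hcorr : ∀ᶠ n in atTop, ∀ x, x ⬝ᵥ x = 1 → c < x ⬝ᵥ (Shat n).correlation *ᵥ x :=
    ((continuousAt_correlation fun _ => hSig.diag_pos).tendsto.comp hconv) hnear
  have hfloor : ∀ᶠ n : ℕ in atTop, ε * (n : ℝ) ^ (-u) < c := by
    have := ((tendsto_rpow_neg_atTop hu).comp tendsto_natCast_atTop_atTop).const_mul ε
    rw [mul_zero] at this
    exact this.eventually_lt_const hc
  refine hconv.congr' ?_
  filter_upwards [hcorr, hfloor] with n hcorr hfloor
  have hmax : (fun i => max (d n i) (ε * (n : ℝ) ^ (-u))) = d n := funext fun i =>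
    max_eq_left (hfloor.trans (lt_of_forall_lt_dotProduct_mulVec (hP n) (hC n) hcorr i)).le
  rw [hSplus', hmax, ← hC n]
  exact (diagonal_sqrt_mul_correlation_mul_diagonal_sqrt (hdiag n)).symm

/-- The eigenvalue-adjusted estimator Σ̂_n⁺, obtained from the spectral
decomposition of the correlation matrix Ĉ_n = V̂^{-1/2} Σ̂_n V̂^{-1/2} by replacing each
eigenvalue d̂ᵢ with max{d̂ᵢ, ε n^{-u}}, is positive definite for every n ≥ 1 and
converges to Σ whenever Σ̂_n → Σ with Σ positive definite. -/
theorem adjusted_estimator_posdef_consistent (p : ℕ)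
    (Sig : Matrix (Fin p) (Fin p) ℝ) (hSig : Sig.PosDef)
    (Shat : ℕ → Matrix (Fin p) (Fin p) ℝ)
    (hsymm : ∀ n, (Shat n).IsSymm)
    (hdiag : ∀ n i, 0 < Shat n i i)
    (hconv : Tendsto Shat atTop (nhds Sig))
    (P : ℕ → Matrix (Fin p) (Fin p) ℝ) (hP : ∀ n, (P n)ᵀ * P n = 1)
    (d : ℕ → Fin p → ℝ)
    (hC : ∀ n,
      (Matrix.diagonal fun i => (Real.sqrt (Shat n i i))⁻¹) * Shat n *
        (Matrix.diagonal fun i => (Real.sqrt (Shat n i i))⁻¹)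
      = (P n)ᵀ * Matrix.diagonal (d n) * P n)
    (ε u : ℝ) (hε : 0 < ε) (hu : 0 < u)
    (Splus : ℕ → Matrix (Fin p) (Fin p) ℝ)
    (hSplus : ∀ n, Splus n =
      (Matrix.diagonal fun i => Real.sqrt (Shat n i i)) * (P n)ᵀ *
        Matrix.diagonal (fun i => max (d n i) (ε * (n : ℝ) ^ (-u))) * P n *
        (Matrix.diagonal fun i => Real.sqrt (Shat n i i))) :
    (∀ n, 1 ≤ n → (Splus n).PosDef) ∧ Tendsto Splus atTop (nhds Sig) :=
  adjusted_estimator_posdef_consistent_general p Sig hSig Shat hdiag hconv P hP d hC ε u hε hu Splus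
    hSplus
end
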